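/- arXiv:math/0005158 — 3 statements merged into one kernel-verified Lean document; each statement's English description precedes it below -/
import Mathlib

section
/- The Humbert invariant H(M^T v M) = H(v) for all M in Sp₄(ℤ) and all integral skew-symmetric 4×4 matrices v, where H(v) = (b₁+b₄)² - 4(b₁b₄ - b₂b₃ - ad) with v written as above. (Invariance of the Humbert invariant under the symplectic action, modulo the line ℤJ.) -/
open Matrix

/-- The Humbert invariant of an integral 4×4 skew-symmetric matrix
`v = [[0,a,b₁,b₂],[-a,0,b₃,b₄],[-b₁,-b₃,0,d],[-b₂,-b₄,-d,0]]`: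
`H(v) = (b₁+b₄)² - 4(b₁b₄ - b₂b₃ - ad)`. -/
def humbertInv (v : Matrix (Fin 4) (Fin 4) ℤ) : ℤ :=
  (v 0 2 + v 1 3) ^ 2 - 4 * (v 0 2 * v 1 3 - v 0 3 * v 1 2 - v 0 1 * v 2 3)

/-- The matrix `J = [[0, I₂],[-I₂, 0]]`. -/
def Jmat : Matrix (Fin 4) (Fin 4) ℤ :=
  !![0, 0, 1, 0; 0, 0, 0, 1; -1, 0, 0, 0; 0, -1, 0, 0]

/-- Explicit formula for a 4×4 determinant. -/
lemma det4 (N : Matrix (Fin 4) (Fin 4) ℤ) : N.det =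
    N 0 0 * (N 1 1 * (N 2 2 * N 3 3 - N 2 3 * N 3 2) - N 1 2 * (N 2 1 * N 3 3 - N 2 3 * N 3 1) + N 1 3 * (N 2 1 * N 3 2 - N 2 2 * N 3 1))
  - N 0 1 * (N 1 0 * (N 2 2 * N 3 3 - N 2 3 * N 3 2) - N 1 2 * (N 2 0 * N 3 3 - N 2 3 * N 3 0) + N 1 3 * (N 2 0 * N 3 2 - N 2 2 * N 3 0))
  + N 0 2 * (N 1 0 * (N 2 1 * N 3 3 - N 2 3 * N 3 1) - N 1 1 * (N 2 0 * N 3 3 - N 2 3 * N 3 0) + N 1 3 * (N 2 0 * N 3 1 - N 2 1 * N 3 0))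
  - N 0 3 * (N 1 0 * (N 2 1 * N 3 2 - N 2 2 * N 3 1) - N 1 1 * (N 2 0 * N 3 2 - N 2 2 * N 3 0) + N 1 2 * (N 2 0 * N 3 1 - N 2 1 * N 3 0)) := by
  rw [Matrix.det_succ_row_zero]
  simp [Fin.sum_univ_four, Matrix.det_fin_three, Matrix.submatrix_apply, Fin.succAbove,
    show (Fin.succ 2 : Fin 4) = 3 from rfl, show (Fin.castSucc 2 : Fin 4) = 2 from rfl,
    show ((2:Fin 4) < 3) from by decide,
    show ((-1:ℤ) ^ ((3:Fin 4):ℕ)) = -1 from by norm_num [show ((3:Fin 4):ℕ) = 3 from rfl]]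
  ring

/-- Pfaffian-style expression of a 4×4 skew matrix. -/
def pfa (w : Matrix (Fin 4) (Fin 4) ℤ) : ℤ :=
  w 0 1 * w 2 3 - w 0 2 * w 1 3 + w 0 3 * w 1 2

lemma skew_entries {w : Matrix (Fin 4) (Fin 4) ℤ} (hw : wᵀ = -w) :
    ∀ i j, w j i = - w i j := by
  intro i j
  have := congrFun (congrFun hw i) j
  simpa [Matrix.transpose_apply] using this

/-- The Pfaffian transforms by the determinant under congruence. -/
lemma pfa_conj (N w : Matrix (Fin 4) (Fin 4) ℤ) (hw : wᵀ = -w) :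
    pfa (Nᵀ * w * N) = N.det * pfa w := by
  have h := skew_entries hw
  have h00 : w 0 0 = 0 := by have := h 0 0; omega
  have h11 : w 1 1 = 0 := by have := h 1 1; omega
  have h22 : w 2 2 = 0 := by have := h 2 2; omega
  have h33 : w 3 3 = 0 := by have := h 3 3; omega
  rw [det4]
  simp only [pfa, Matrix.mul_apply, Matrix.transpose_apply, Fin.sum_univ_four]
  rw [show w 1 0 = -w 0 1 from h 0 1, show w 2 0 = -w 0 2 from h 0 2,
    show w 3 0 = -w 0 3 from h 0 3, show w 2 1 = -w 1 2 from h 1 2,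
    show w 3 1 = -w 1 3 from h 1 3, show w 3 2 = -w 2 3 from h 2 3,
    h00, h11, h22, h33]
  ring

/-- the Humbert invariant is invariant under the action `v ↦ MᵀvM` of the
integral symplectic group `Sp₄(ℤ) = {M : MᵀJM = J}` on integral skew-symmetric 4×4
matrices. -/
theorem humbertInv_symplectic_invariant (M v : Matrix (Fin 4) (Fin 4) ℤ)
    (hM : Mᵀ * Jmat * M = Jmat) (hv : vᵀ = -v) :
    humbertInv (Mᵀ * v * M) = humbertInv v := by
  -- J² = -1
  have hJJ : Jmat * Jmat = -1 := by decide
  -- det M = 1, via the Pfaffian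
  have hJskew : Jmatᵀ = -Jmat := by decide
  have hdet : M.det = 1 := by
    have hp := pfa_conj M Jmat hJskew
    rw [hM] at hp
    have hpj : pfa Jmat = -1 := by decide
    rw [hpj] at hp
    linarith
  -- the companion symplectic relation `M J Mᵀ = J`
  have h1 : (-(Jmat * Mᵀ * Jmat)) * M = 1 := by
    have hA : Jmat * (Mᵀ * Jmat * M) = Jmat * Jmat := by rw [hM]
    rw [hJJ] at hA
    calc (-(Jmat * Mᵀ * Jmat)) * M = -(Jmat * (Mᵀ * Jmat * M)) := by
          rw [neg_mul]; rw [mul_assoc, mul_assoc, mul_assoc]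
      _ = 1 := by rw [hA]; simp
  have h2 : M * (-(Jmat * Mᵀ * Jmat)) = 1 := mul_eq_one_comm.mp h1
  have hM' : M * Jmat * Mᵀ = Jmat := by
    have h3 : M * Jmat * Mᵀ * Jmat = -1 := by
      have h4 : M * (Jmat * Mᵀ * Jmat) = -1 := by
        have := h2
        rw [mul_neg] at this
        exact neg_eq_iff_eq_neg.mp (by rw [this])
      calc M * Jmat * Mᵀ * Jmat = M * (Jmat * Mᵀ * Jmat) := by
            rw [mul_assoc, mul_assoc, mul_assoc]
        _ = -1 := h4
    have h5 : -(M * Jmat * Mᵀ) = -Jmat := by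
      calc -(M * Jmat * Mᵀ) = M * Jmat * Mᵀ * (Jmat * Jmat) := by rw [hJJ]; simp only [mul_assoc]; simp
        _ = (M * Jmat * Mᵀ * Jmat) * Jmat := (mul_assoc _ _ _).symm
        _ = -1 * Jmat := by rw [h3]
        _ = -Jmat := by simp
    exact neg_injective h5
  have hM'' : M * Jmatᵀ * Mᵀ = Jmatᵀ := by
    have := congrArg Matrix.transpose hM'
    simpa [Matrix.transpose_mul, mul_assoc] using this
  -- `w := Mᵀ v M` is skew
  have hw : (Mᵀ * v * M)ᵀ = -(Mᵀ * v * M) := by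
    simp only [Matrix.transpose_mul, Matrix.transpose_transpose, hv]
    simp [mul_assoc]
  -- trace identity for the linear part
  have key : ∀ w : Matrix (Fin 4) (Fin 4) ℤ, wᵀ = -w →
      (Jmatᵀ * w).trace = 2 * (w 0 2 + w 1 3) := by
    intro w hwk
    have h := skew_entries hwk
    rw [hJskew]
    simp [Matrix.trace, Matrix.diag, Matrix.mul_apply, Fin.sum_univ_four, Jmat,
      Matrix.vecHead, Matrix.vecTail]
    rw [show w 2 0 = -w 0 2 from h 0 2, show w 3 1 = -w 1 3 from h 1 3]
    ring
  have htr : (Jmatᵀ * (Mᵀ * v * M)).trace = (Jmatᵀ * v).trace := by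
    calc (Jmatᵀ * (Mᵀ * v * M)).trace = ((Jmatᵀ * (Mᵀ * v)) * M).trace := by
          rw [← mul_assoc]
      _ = (M * (Jmatᵀ * (Mᵀ * v))).trace := Matrix.trace_mul_comm _ _
      _ = ((M * Jmatᵀ * Mᵀ) * v).trace := by
          rw [mul_assoc (M * Jmatᵀ), ← mul_assoc M, ← mul_assoc]
      _ = (Jmatᵀ * v).trace := by rw [hM'']
  have hsig : (Mᵀ * v * M) 0 2 + (Mᵀ * v * M) 1 3 = v 0 2 + v 1 3 := by
    have h5 := htr
    rw [key _ hw, key _ hv] at h5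
    omega
  have hP : pfa (Mᵀ * v * M) = pfa v := by
    rw [pfa_conj M v hv, hdet, one_mul]
  simp only [humbertInv]
  have e2 : (Mᵀ * v * M) 0 1 * (Mᵀ * v * M) 2 3 - (Mᵀ * v * M) 0 2 * (Mᵀ * v * M) 1 3
      + (Mᵀ * v * M) 0 3 * (Mᵀ * v * M) 1 2
      = v 0 1 * v 2 3 - v 0 2 * v 1 3 + v 0 3 * v 1 2 := hP
  linear_combination ((Mᵀ * v * M) 0 2 + (Mᵀ * v * M) 1 3 + v 0 2 + v 1 3) * hsig + 4 * e2
end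

section
/- Let D₀ be a product of distinct primes and let S be the set of primes dividing D₀, and let D be an integer with -D a quadratic nonresidue appropriately arranged. Then (Dirichlet-type existence): there exists a prime p not dividing 2D such that for every prime ℓ, the Hilbert symbol (-D, p)_ℓ = -1 if and only if ℓ ∈ S. (Existence of the auxiliary prime in Hashimoto's model, as a consequence of Dirichlet's theorem on primes in arithmetic progressions.) -/
/-!
By Dirichlet's theorem and the Chinese remainder theorem there is a prime `p > 2D` with
`p ≡ 5 (mod 8)` if `2 ∣ D₀`, `p ≡ 1 (mod 8)` otherwise, and, for every odd prime `q ∣ D`,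
`p` a square mod `q` exactly when `q ∤ D₀`. The symbols `(-D, p)_ℓ` are then computed place by
place. For `ℓ ∣ D₀`, `ℓ` divides `-D` exactly once and `p` is a non-square unit at `ℓ`, so
`z² = -D x² + p y²` has no primitive `ℓ`-adic solution. For `ℓ = 2 ∤ D₀` and for odd `ℓ ∣ N`,
`p` is an `ℓ`-adic square; for `ℓ ∤ 2Dp` both entries are units. For `ℓ = p`, quadratic
reciprocity gives `(-D / p) = (-1)^#S = 1`, so `-D` is a `p`-adic square.
-/

/-- The Hilbert symbol `(a, b)_ℓ` equals `+1` iff the conic `z² = a·x² + b·y²` has a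
nontrivial `ℚ_ℓ`-rational point; `(a,b)_ℓ = -1` is the negation of this. -/
def HilbertSymbolOne (ℓ : ℕ) [Fact ℓ.Prime] (a b : ℚ) : Prop :=
  ∃ x y z : ℚ_[ℓ], (x, y, z) ≠ (0, 0, 0) ∧ z ^ 2 = (a : ℚ_[ℓ]) * x ^ 2 + (b : ℚ_[ℓ]) * y ^ 2

open Function Polynomial

namespace PadicInt

variable {p : ℕ} [Fact p.Prime]

theorem isUnit_iff_toZMod_ne_zero {x : ℤ_[p]} : IsUnit x ↔ toZMod x ≠ 0 := by
  rw [Ne, ← RingHom.mem_ker, ker_toZMod, IsLocalRing.mem_maximalIdeal, mem_nonunits_iff,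
    not_not]

theorem toZMod_eq_zero_iff_dvd {x : ℤ_[p]} : toZMod x = 0 ↔ (p : ℤ_[p]) ∣ x := by
  rw [← RingHom.mem_ker, ker_toZMod, maximalIdeal_eq_span_p, Ideal.mem_span_singleton]

theorem isSquare_of_norm_sq_sub_lt {c t : ℤ_[p]} (h : ‖t ^ 2 - c‖ < ‖2 * t‖ ^ 2) :
    IsSquare c := by
  obtain ⟨s, hs, -⟩ :=
    hensels_lemma (F := X ^ 2 - C c) (a := t) (by simpa [one_add_one_eq_two] using h)
  exact ⟨s, by simpa [sub_eq_zero, sq, eq_comm] using hs⟩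

theorem isSquare_of_isSquare_toZMod (hp : p ≠ 2) {c : ℤ_[p]} (hc : toZMod c ≠ 0)
    (hsq : IsSquare (toZMod c)) : IsSquare c := by
  obtain ⟨s, hs⟩ := hsq
  obtain ⟨t, rfl⟩ := ZMod.natCast_zmod_surjective s
  apply isSquare_of_norm_sq_sub_lt (t := (t : ℤ_[p]))
  have hsub : ‖(t : ℤ_[p]) ^ 2 - c‖ < 1 := by
    rw [norm_lt_one_iff_dvd, ← toZMod_eq_zero_iff_dvd, map_sub, map_pow, map_natCast, hs,
      sq, sub_self]
  have htwo : IsUnit (2 * (t : ℤ_[p])) := by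
    rw [isUnit_iff_toZMod_ne_zero, map_mul, map_ofNat, map_natCast]
    refine mul_ne_zero (Ring.two_ne_zero (by rwa [ZMod.ringChar_zmod_n])) fun ht => hc ?_
    rw [hs, ht, zero_mul]
  rwa [isUnit_iff.mp htwo, one_pow]

theorem isSquare_intCast_of_isSquare (hp : p ≠ 2) {c : ℤ} (hc : (c : ZMod p) ≠ 0)
    (hsq : IsSquare (c : ZMod p)) : IsSquare (c : ℤ_[p]) :=
  isSquare_of_isSquare_toZMod hp (by rwa [map_intCast]) (by rwa [map_intCast])

theorem isSquare_intCast_of_emod_eight_eq_one {c : ℤ} (hc : c % 8 = 1) :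
    IsSquare (c : ℤ_[2]) := by
  apply isSquare_of_norm_sq_sub_lt (t := 1)
  obtain ⟨k, rfl⟩ : ∃ k, c = 8 * k + 1 := ⟨c / 8, by omega⟩
  have h2 : ‖(2 : ℤ_[2])‖ = 2⁻¹ := by simpa using norm_p (p := 2)
  have hk : ‖(k : ℤ_[2])‖ ≤ 1 := norm_le_one _
  rw [show (1 : ℤ_[2]) ^ 2 - ((8 * k + 1 : ℤ) : ℤ_[2]) = -(2 ^ 3 * k) by push_cast; ring,
    norm_neg, norm_mul, norm_pow, mul_one, h2]
  nlinarith [norm_nonneg (k : ℤ_[2])]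

end PadicInt

namespace Padic

variable {p : ℕ} [Fact p.Prime]

theorem exists_eq_mul_padicInt_isUnit {x y z : ℚ_[p]} (h : (x, y, z) ≠ 0) :
    ∃ (w : ℚ_[p]) (X Y Z : ℤ_[p]), w ≠ 0 ∧ x = w * X ∧ y = w * Y ∧ z = w * Z ∧
      (IsUnit X ∨ IsUnit Y ∨ IsUnit Z) := by
  -- Divide by the coordinate of largest norm.
  set r := max ‖x‖ (max ‖y‖ ‖z‖)
  obtain ⟨w, hw, hwr⟩ : ∃ w, (w = x ∨ w = y ∨ w = z) ∧ ‖w‖ = r := by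
    rcases max_choice ‖x‖ (max ‖y‖ ‖z‖) with h | h
    · exact ⟨x, .inl rfl, h.symm⟩
    rcases max_choice ‖y‖ ‖z‖ with h' | h'
    exacts [⟨y, .inr (.inl rfl), (h.trans h').symm⟩, ⟨z, .inr (.inr rfl), (h.trans h').symm⟩]
  have hw0 : w ≠ 0 := by
    rintro rfl
    have := hwr.symm.le
    simp only [r, norm_zero, max_le_iff, norm_le_zero_iff] at this
    simp [this] at h
  have hdiv : ∀ v : ℚ_[p], ‖v‖ ≤ r → ∃ V : ℤ_[p], v = w * V ∧ (v = w → IsUnit V) := by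
    intro v hv
    have hvw : ‖v / w‖ ≤ 1 := by
      rwa [norm_div, div_le_one (norm_pos_iff.2 hw0), hwr]
    refine ⟨⟨v / w, hvw⟩, (mul_div_cancel₀ v hw0).symm, fun hv => PadicInt.isUnit_iff.2 ?_⟩
    exact (show ‖v / w‖ = 1 by rw [hv, div_self hw0, norm_one])
  obtain ⟨X, hX, hXu⟩ := hdiv x (le_max_left ..)
  obtain ⟨Y, hY, hYu⟩ := hdiv y ((le_max_left ..).trans (le_max_right ..))
  obtain ⟨Z, hZ, hZu⟩ := hdiv z ((le_max_right ..).trans (le_max_right ..))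
  refine ⟨w, X, Y, Z, hw0, hX, hY, hZ, ?_⟩
  rcases hw with rfl | rfl | rfl
  exacts [.inl (hXu rfl), .inr (.inl (hYu rfl)), .inr (.inr (hZu rfl))]

end Padic

section HilbertSymbolOne

variable {ℓ : ℕ} [Fact ℓ.Prime]

theorem HilbertSymbolOne.exists_isUnit {a b : ℤ} (h : HilbertSymbolOne ℓ a b) :
    ∃ X Y Z : ℤ_[ℓ], Z ^ 2 = a * X ^ 2 + b * Y ^ 2 ∧ (IsUnit X ∨ IsUnit Y ∨ IsUnit Z) := by
  obtain ⟨x, y, z, hne, heq⟩ := h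
  obtain ⟨w, X, Y, Z, hw, rfl, rfl, rfl, hunit⟩ := Padic.exists_eq_mul_padicInt_isUnit hne
  refine ⟨X, Y, Z, ?_, hunit⟩
  have : w ^ 2 * (Z : ℚ_[ℓ]) ^ 2 = w ^ 2 * (a * X ^ 2 + b * Y ^ 2) := by
    push_cast at heq
    linear_combination heq
  exact Subtype.ext (by exact_mod_cast mul_left_cancel₀ (pow_ne_zero 2 hw) this)

theorem HilbertSymbolOne.of_isSquare_left {a : ℤ} {b : ℚ} (h : IsSquare (a : ℤ_[ℓ])) :
    HilbertSymbolOne ℓ a b := by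
  obtain ⟨t, ht⟩ := h
  refine ⟨1, 0, t, by simp, ?_⟩
  simpa [← sq] using (congrArg ((↑) : ℤ_[ℓ] → ℚ_[ℓ]) ht).symm

theorem HilbertSymbolOne.of_isSquare_right {a : ℚ} {b : ℤ} (h : IsSquare (b : ℤ_[ℓ])) :
    HilbertSymbolOne ℓ a b := by
  obtain ⟨t, ht⟩ := h
  refine ⟨0, 1, t, by simp, ?_⟩
  simpa [← sq] using (congrArg ((↑) : ℤ_[ℓ] → ℚ_[ℓ]) ht).symm

theorem HilbertSymbolOne.of_intCast_ne_zero (hℓ : ℓ ≠ 2) {a b : ℤ} (ha : (a : ZMod ℓ) ≠ 0)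
    (hb : (b : ZMod ℓ) ≠ 0) : HilbertSymbolOne ℓ a b := by
  -- Solve `a x² + b y² ≡ 1 (mod ℓ)`, then lift `z = √(a x² + b y²)` by Hensel's lemma.
  obtain ⟨x, y, hxy⟩ : ∃ x y : ℤ, ((a * x ^ 2 + b * y ^ 2 : ℤ) : ZMod ℓ) = 1 := by
    obtain ⟨x, y, h⟩ := FiniteField.exists_root_sum_quadratic
      (f := C (a : ZMod ℓ) * X ^ 2 + C 0 * X + C 0)
      (g := C (b : ZMod ℓ) * X ^ 2 + C 0 * X + C (-1))
      (degree_quadratic ha) (degree_quadratic hb)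
      (by rw [ZMod.card]; exact Nat.odd_iff.1 ((Fact.out : ℓ.Prime).odd_of_ne_two hℓ))
    obtain ⟨x, rfl⟩ := ZMod.intCast_surjective x
    obtain ⟨y, rfl⟩ := ZMod.intCast_surjective y
    refine ⟨x, y, ?_⟩
    simp only [eval_add, eval_mul, eval_C, eval_pow, eval_X] at h
    push_cast
    linear_combination h
  obtain ⟨t, ht⟩ := PadicInt.isSquare_intCast_of_isSquare hℓ (c := a * x ^ 2 + b * y ^ 2)
    (by rw [hxy]; exact one_ne_zero) (by rw [hxy]; exact IsSquare.one)
  refine ⟨x, y, t, fun h0 => ?_, ?_⟩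
  · obtain ⟨-, -, rfl⟩ : x = 0 ∧ y = 0 ∧ t = 0 := by simpa using h0
    have := congrArg PadicInt.toZMod ht
    rw [mul_zero, map_zero, map_intCast, hxy] at this
    exact one_ne_zero this
  · simpa [← sq] using (congrArg ((↑) : ℤ_[ℓ] → ℚ_[ℓ]) ht).symm

open PadicInt in
theorem not_hilbertSymbolOne_of_not_isSquare {m b : ℤ} (hm : ¬(ℓ : ℤ) ∣ m)
    (hb : ¬IsSquare (b : ZMod ℓ)) : ¬HilbertSymbolOne ℓ (ℓ * m : ℤ) b := by
  intro h
  obtain ⟨X, Y, Z, hXYZ, hunit⟩ := h.exists_isUnit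
  -- Modulo `ℓ`, `Z² = b Y²` with `b` a non-square forces `ℓ ∣ Y, Z`;
  -- then `ℓ ∣ m X²` forces `ℓ ∣ X`.
  have hmod : toZMod Z ^ 2 = b * toZMod Y ^ 2 := by
    simpa using congrArg toZMod hXYZ
  have hY : toZMod Y = 0 := by
    by_contra hY
    exact hb ⟨toZMod Z / toZMod Y, by field_simp; linear_combination -hmod⟩
  have hZ : toZMod Z = 0 := by simpa [hY] using hmod
  obtain ⟨Y, rfl⟩ := toZMod_eq_zero_iff_dvd.1 hY
  obtain ⟨Z, rfl⟩ := toZMod_eq_zero_iff_dvd.1 hZ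
  have hℓ0 : (ℓ : ℤ_[ℓ]) ≠ 0 := Nat.cast_ne_zero.2 (Fact.out : ℓ.Prime).ne_zero
  have hmX : (ℓ : ℤ_[ℓ]) * (Z ^ 2 - b * Y ^ 2) = m * X ^ 2 :=
    mul_left_cancel₀ hℓ0 (by push_cast at hXYZ; linear_combination hXYZ)
  have hX : toZMod X = 0 := by
    have hm' : (m : ZMod ℓ) ≠ 0 := by rwa [Ne, ZMod.intCast_zmod_eq_zero_iff_dvd]
    simpa [hm'] using (congrArg toZMod hmX).symm
  simp only [isUnit_iff_toZMod_ne_zero, hX, hY, hZ, ne_eq, not_true_eq_false, or_self] at hunit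

theorem not_hilbertSymbolOne_two {m b : ℤ} (hm : Odd m) (hb : b % 8 = 5) :
    ¬HilbertSymbolOne 2 (2 * m : ℤ) b := by
  have hmod8 : ∀ k x y z : ZMod 8, IsUnit x ∨ IsUnit y ∨ IsUnit z →
      z ^ 2 ≠ 2 * (2 * k + 1) * x ^ 2 + 5 * y ^ 2 := by
    decide
  intro h
  obtain ⟨X, Y, Z, hXYZ, hunit⟩ := h.exists_isUnit
  obtain ⟨k, rfl⟩ := hm
  have hb8 : (b : ZMod 8) = 5 := by
    obtain ⟨c, rfl⟩ : ∃ c, b = 8 * c + 5 := ⟨b / 8, by omega⟩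
    push_cast
    rw [show (8 : ZMod 8) = 0 from rfl, zero_mul, zero_add]
  let φ := PadicInt.toZModPow (p := 2) 3
  refine hmod8 (k : ZMod 8) (φ X) (φ Y) (φ Z)
    (hunit.imp (·.map φ) (Or.imp (·.map φ) (·.map φ))) ?_
  have := congrArg φ hXYZ
  simp only [map_pow, map_add, map_mul, map_intCast, map_one, Int.cast_mul, Int.cast_ofNat,
    Int.cast_add, Int.cast_one, hb8] at this
  rwa [map_ofNat] at this

end HilbertSymbolOne

section Multiplicative

variable {R M F : Type*} [CommSemiring R] [CommMonoid M] [FunLike F R M] [MonoidHomClass F R M]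

theorem map_natCast_eq_one_of_forall_prime_dvd (f : F) {n : ℕ} (hn : n ≠ 0)
    (h : ∀ q, q.Prime → q ∣ n → f q = 1) : f n = 1 := by
  rw [← Nat.prod_primeFactorsList hn, Nat.cast_list_prod, map_list_prod, List.map_map]
  exact List.prod_eq_one fun x hx => by
    obtain ⟨q, hq, rfl⟩ := List.mem_map.1 hx
    exact h q (Nat.prime_of_mem_primeFactorsList hq) (Nat.dvd_of_mem_primeFactorsList hq)

theorem map_natCast_eq_neg_one_pow_of_squarefree [HasDistribNeg M] (f : F) {n : ℕ}
    (hn : Squarefree n) (h : ∀ q, q.Prime → q ∣ n → f q = -1) :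
    f n = (-1) ^ n.primeFactors.card := by
  rw [← Nat.prod_primeFactors_of_squarefree hn, Nat.cast_prod, map_prod,
    Finset.prod_congr rfl fun q hq => h q (Nat.prime_of_mem_primeFactors hq)
      (Nat.dvd_of_mem_primeFactors hq), Finset.prod_const, Nat.prod_primeFactors_of_squarefree hn]

end Multiplicative

theorem FiniteField.exists_ne_zero_isSquare_iff {F : Type*} [Field F] [Fintype F]
    (hF : ringChar F ≠ 2) (P : Prop) : ∃ a : F, a ≠ 0 ∧ (IsSquare a ↔ P) := by
  by_cases hP : P
  · exact ⟨1, one_ne_zero, iff_of_true IsSquare.one hP⟩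
  · obtain ⟨a, ha⟩ := exists_nonsquare hF
    exact ⟨a, fun h => ha (h ▸ IsSquare.zero), iff_of_false ha hP⟩

theorem Nat.exists_prime_gt_forall_of_modEq {ι : Type*} (t : Finset ι) (s : ι → ℕ)
    (P : ι → ℕ → Prop) (hs : ∀ i ∈ t, s i ≠ 0) (hst : Set.Pairwise t (Nat.Coprime on s))
    (hP : ∀ i ∈ t, ∃ r, r.Coprime (s i) ∧ ∀ m, m ≡ r [MOD s i] → P i m) (n : ℕ) :
    ∃ p, n < p ∧ p.Prime ∧ ∀ i ∈ t, P i p := by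
  choose! r hr hrP using hP
  obtain ⟨c, hc⟩ := Nat.chineseRemainderOfFinset r s t hs hst
  have : NeZero (∏ i ∈ t, s i) := ⟨Finset.prod_ne_zero_iff.2 hs⟩
  have hunit : IsUnit (c : ZMod (∏ i ∈ t, s i)) := by
    rw [ZMod.isUnit_iff_coprime]
    exact Nat.Coprime.prod_right fun i hi => (hc i hi).gcd_eq.trans (hr i hi)
  obtain ⟨p, hnp, hp, hpc⟩ := Nat.forall_exists_prime_gt_and_eq_mod hunit n
  refine ⟨p, hnp, hp, fun i hi => hrP i hi p ?_⟩
  have hpc := (ZMod.natCast_eq_natCast_iff _ _ _).1 hpc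
  exact (hpc.of_dvd (Finset.dvd_prod_of_mem s hi)).trans (hc i hi)

structure IsAuxiliaryPrime (D₀ N p : ℕ) : Prop where
  prime : p.Prime
  not_dvd : ¬p ∣ 2 * (D₀ * N)
  mod_eight : p % 8 = if 2 ∣ D₀ then 5 else 1
  isSquare_iff : ∀ q, q.Prime → q ≠ 2 → q ∣ D₀ * N → (IsSquare (p : ZMod q) ↔ ¬q ∣ D₀)

theorem exists_isAuxiliaryPrime {D₀ N : ℕ} (hD : D₀ * N ≠ 0) :
    ∃ p, IsAuxiliaryPrime D₀ N p := by
  let t := insert 2 (D₀ * N).primeFactors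
  let s : ℕ → ℕ := fun q => if q = 2 then 8 else q
  let P : ℕ → ℕ → Prop := fun q m => if q = 2 then m % 8 = (if 2 ∣ D₀ then 5 else 1)
    else (IsSquare (m : ZMod q) ↔ ¬q ∣ D₀)
  have ht : ∀ q ∈ t, q.Prime := fun q hq => by
    rcases Finset.mem_insert.1 hq with rfl | hq
    exacts [Nat.prime_two, Nat.prime_of_mem_primeFactors hq]
  have hs : ∀ q ∈ t, s q ≠ 0 := fun q hq => by
    simp only [s]; split_ifs <;> simp [(ht q hq).ne_zero]
  have hst : Set.Pairwise t (Nat.Coprime on s) := fun q hq q' hq' hne => by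
    have hs3 : ∀ q, s q ∣ q ^ 3 := fun q => by
      simp only [s]; split_ifs with h
      exacts [h ▸ dvd_rfl, dvd_pow_self q three_ne_zero]
    exact (((Nat.coprime_primes (ht q hq) (ht q' hq')).2 hne).pow 3 3).coprime_dvd_left
      (hs3 q) |>.coprime_dvd_right (hs3 q')
  have hP : ∀ q ∈ t, ∃ r, r.Coprime (s q) ∧ ∀ m, m ≡ r [MOD s q] → P q m := fun q hq => by
    by_cases hq2 : q = 2
    · subst hq2
      refine ⟨if 2 ∣ D₀ then 5 else 1, by simp only [s]; split_ifs <;> norm_num, fun m hm => ?_⟩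
      simp only [s, P, ↓reduceIte] at hm ⊢
      exact Eq.trans hm (Nat.mod_eq_of_lt (by split_ifs <;> norm_num))
    · have := Fact.mk (ht q hq)
      obtain ⟨a, ha0, ha⟩ := FiniteField.exists_ne_zero_isSquare_iff (F := ZMod q)
        (by rwa [ZMod.ringChar_zmod_n]) (¬q ∣ D₀)
      refine ⟨a.val, ?_, fun m hm => ?_⟩
      · simp only [s, hq2, if_false]
        rwa [← ZMod.isUnit_iff_coprime, ZMod.natCast_zmod_val, isUnit_iff_ne_zero]
      · simp only [s, P, hq2, if_false] at hm ⊢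
        rwa [(ZMod.natCast_eq_natCast_iff _ _ _).2 hm, ZMod.natCast_zmod_val]
  obtain ⟨p, hlt, hp, hpP⟩ := Nat.exists_prime_gt_forall_of_modEq t s P hs hst hP (2 * (D₀ * N))
  refine ⟨p, hp, fun h => (Nat.le_of_dvd (by omega) h).not_gt hlt, ?_, fun q hq hq2 hqD => ?_⟩
  · simpa [P] using hpP 2 (Finset.mem_insert_self _ _)
  · simpa [P, hq2] using hpP q (Finset.mem_insert_of_mem (Nat.mem_primeFactors.2 ⟨hq, hqD, hD⟩))

namespace IsAuxiliaryPrime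

variable {D₀ N p : ℕ}

theorem ne_two (hp : IsAuxiliaryPrime D₀ N p) : p ≠ 2 := by
  rintro rfl
  exact hp.not_dvd (dvd_mul_right 2 _)

theorem mod_four (hp : IsAuxiliaryPrime D₀ N p) : p % 4 = 1 := by
  have := hp.mod_eight
  split_ifs at this <;> omega

theorem natCast_ne_zero (hp : IsAuxiliaryPrime D₀ N p) : ((D₀ * N : ℕ) : ZMod p) ≠ 0 := by
  rw [Ne, ZMod.natCast_eq_zero_iff]
  exact fun h => hp.not_dvd (dvd_mul_of_dvd_right h 2)

theorem isSquare_prime_iff (hp : IsAuxiliaryPrime D₀ N p) {q : ℕ} (hq : q.Prime)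
    (hqD : q ∣ D₀ * N) : IsSquare (q : ZMod p) ↔ ¬q ∣ D₀ := by
  have := Fact.mk hp.prime
  by_cases hq2 : q = 2
  · subst hq2
    rw [Nat.cast_ofNat, ZMod.exists_sq_eq_two_iff hp.ne_two, hp.mod_eight]
    split_ifs with h <;> simp [h]
  · have := Fact.mk hq
    rw [ZMod.exists_sq_eq_prime_iff_of_mod_four_eq_one hp.mod_four hq2]
    exact hp.isSquare_iff q hq hq2 hqD

theorem isSquare_neg (hp : IsAuxiliaryPrime D₀ N p) (hsf : Squarefree D₀)
    (heven : Even D₀.primeFactors.card) (hcop : N.Coprime D₀) :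
    IsSquare (-((D₀ * N : ℕ) : ZMod p)) := by
  have := Fact.mk hp.prime
  have hN : N ≠ 0 := by
    rintro rfl
    exact hp.not_dvd (by simp)
  have hsymD₀ : legendreSym p D₀ = (-1) ^ D₀.primeFactors.card := by
    refine map_natCast_eq_neg_one_pow_of_squarefree (legendreSym.hom p) hsf fun q hq hqD₀ => ?_
    exact (legendreSym.eq_neg_one_iff' p).2
      ((hp.isSquare_prime_iff hq (dvd_mul_of_dvd_left hqD₀ N)).not.2 (not_not.2 hqD₀))
  have hsymN : legendreSym p N = 1 := by
    refine map_natCast_eq_one_of_forall_prime_dvd (legendreSym.hom p) hN fun q hq hqN => ?_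
    have hqD : q ∣ D₀ * N := dvd_mul_of_dvd_right hqN D₀
    have hqp : (q : ZMod p) ≠ 0 := by
      rw [Ne, ZMod.natCast_eq_zero_iff]
      exact fun h => hp.not_dvd ((h.trans hqD).mul_left 2)
    refine (legendreSym.eq_one_iff' p hqp).2 ((hp.isSquare_prime_iff hq hqD).2 fun hqD₀ => ?_)
    exact hq.one_lt.ne' (Nat.eq_one_of_dvd_coprimes hcop hqN hqD₀)
  have hD : IsSquare ((D₀ * N : ℕ) : ZMod p) := by
    rw [← legendreSym.eq_one_iff' p hp.natCast_ne_zero, Nat.cast_mul, legendreSym.mul, hsymD₀,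
      hsymN, heven.neg_one_pow, one_mul]
  rw [neg_eq_neg_one_mul]
  exact (ZMod.exists_sq_eq_neg_one_iff.2 (by rw [hp.mod_four]; decide)).mul hD

variable {ℓ : ℕ} [Fact ℓ.Prime]

theorem not_hilbertSymbolOne (hp : IsAuxiliaryPrime D₀ N p) (hsf : Squarefree D₀)
    (hcop : N.Coprime D₀) (hℓ : ℓ ∣ D₀) : ¬HilbertSymbolOne ℓ (-((D₀ * N : ℕ) : ℚ)) p := by
  have hℓp : ℓ.Prime := Fact.out
  obtain ⟨d, hd⟩ := dvd_mul_of_dvd_left hℓ N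
  have hℓd : ¬ℓ ∣ d := by
    rintro ⟨e, rfl⟩
    have hℓN : ℓ.Coprime N := (hℓp.coprime_iff_not_dvd).2 fun h =>
      hℓp.one_lt.ne' (Nat.eq_one_of_dvd_coprimes hcop h hℓ)
    refine hℓp.one_lt.ne' (Nat.isUnit_iff.1 (hsf ℓ ?_))
    exact (Nat.Coprime.mul_left hℓN hℓN).dvd_of_dvd_mul_right ⟨e, by rw [hd, mul_assoc]⟩
  have hneg : -((D₀ * N : ℕ) : ℚ) = ((ℓ * -(d : ℤ) : ℤ) : ℚ) := by
    rw [hd]; push_cast; ring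
  rw [hneg, ← Int.cast_natCast]
  by_cases hℓ2 : ℓ = 2
  · subst hℓ2
    refine not_hilbertSymbolOne_two (Int.odd_iff.2 ?_) ?_
    · omega
    · have := hp.mod_eight
      rw [if_pos hℓ] at this
      omega
  · refine not_hilbertSymbolOne_of_not_isSquare (by rwa [dvd_neg, Int.natCast_dvd_natCast]) ?_
    rw [Int.cast_natCast, hp.isSquare_iff ℓ hℓp hℓ2 (hd ▸ dvd_mul_right ℓ d), not_not]
    exact hℓ

theorem hilbertSymbolOne (hp : IsAuxiliaryPrime D₀ N p) (hsf : Squarefree D₀)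
    (heven : Even D₀.primeFactors.card) (hcop : N.Coprime D₀) (hℓ : ¬ℓ ∣ D₀) :
    HilbertSymbolOne ℓ (-((D₀ * N : ℕ) : ℚ)) p := by
  have hℓp : ℓ.Prime := Fact.out
  by_cases hℓeq : ℓ = p
  · subst hℓeq
    have hD : IsSquare ((-(D₀ * N : ℕ) : ℤ) : ℤ_[ℓ]) :=
      PadicInt.isSquare_intCast_of_isSquare hp.ne_two (by simpa using hp.natCast_ne_zero)
        (by simpa using hp.isSquare_neg hsf heven hcop)
    simpa using HilbertSymbolOne.of_isSquare_left (b := ℓ) hD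
  by_cases hℓ2 : ℓ = 2
  · subst hℓ2
    have h1 : (p : ℤ) % 8 = 1 := by
      have := hp.mod_eight
      rw [if_neg hℓ] at this
      omega
    simpa using HilbertSymbolOne.of_isSquare_right (a := -((D₀ * N : ℕ) : ℚ))
      (PadicInt.isSquare_intCast_of_emod_eight_eq_one h1)
  have hpℓ : ((p : ℤ) : ZMod ℓ) ≠ 0 := by
    rw [Int.cast_natCast, Ne, ZMod.natCast_eq_zero_iff]
    exact fun h => hℓeq ((Nat.prime_dvd_prime_iff_eq hℓp hp.prime).1 h)
  by_cases hℓN : ℓ ∣ N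
  · have hpsq : IsSquare ((p : ℤ) : ZMod ℓ) := by
      rw [Int.cast_natCast]
      exact (hp.isSquare_iff ℓ hℓp hℓ2 (dvd_mul_of_dvd_right hℓN D₀)).2 hℓ
    simpa using HilbertSymbolOne.of_isSquare_right (a := -((D₀ * N : ℕ) : ℚ))
      (PadicInt.isSquare_intCast_of_isSquare hℓ2 hpℓ hpsq)
  · have hD : ((-(D₀ * N : ℕ) : ℤ) : ZMod ℓ) ≠ 0 := by
      rw [Int.cast_neg, Int.cast_natCast, neg_ne_zero, Ne, ZMod.natCast_eq_zero_iff]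
      exact fun h => (hℓp.dvd_mul.1 h).elim hℓ hℓN
    simpa using HilbertSymbolOne.of_intCast_ne_zero hℓ2 hD hpℓ

end IsAuxiliaryPrime

/-- Let `D₀` be a product of an even number of distinct primes (the
discriminant of an indefinite quaternion algebra over `ℚ`), `S` the set of primes dividing
`D₀`, and `D = D₀·N` with `N` coprime to `D₀`. Then there is a prime `p` not dividing `2D`
such that for every prime `ℓ`, the Hilbert symbol `(-D, p)_ℓ = -1` if and only if `ℓ ∈ S`,
i.e. `ℓ ∣ D₀`. -/
theorem exists_auxiliary_prime (D₀ N D : ℕ) (hsf : Squarefree D₀)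
    (heven : Even D₀.primeFactors.card) (hcop : Nat.Coprime N D₀) (hD : D = D₀ * N)
    (hN : 0 < N) :
    ∃ p : ℕ, p.Prime ∧ ¬ p ∣ 2 * D ∧
      ∀ (ℓ : ℕ) [Fact ℓ.Prime],
        (¬ HilbertSymbolOne ℓ (-(D : ℚ)) (p : ℚ)) ↔ ℓ ∣ D₀ := by
  subst hD
  obtain ⟨p, hp⟩ := exists_isAuxiliaryPrime (mul_ne_zero hsf.ne_zero hN.ne')
  exact ⟨p, hp.prime, hp.not_dvd, fun ℓ _ =>
    ⟨not_imp_comm.1 (hp.hilbertSymbolOne hsf heven hcop), hp.not_hilbertSymbolOne hsf hcop⟩⟩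
end

section
/- Let N be a lattice (free ℤ-module of finite rank n-1 with symmetric bilinear form) whose quadratic form represents only integers ≡ 0 or 1 mod 4. Define M_N to be the subgroup of (N(-2) ⊕ ℤζ) ⊗ ℚ generated by N ⊕ ℤζ together with all elements ½(x + (x,x)ζ) for x ∈ N, where ζ has norm 2 and is orthogonal to N, and N(-2) means the form scaled by -2. Then the induced bilinear form on M_N is integral and even, and ζ ∈ M_N has (ζ,ζ) = 2. -/
open Matrix

variable {m : ℕ}

lemma kani_sym (B : Matrix (Fin m) (Fin m) ℤ) (hB : Bᵀ = B) (x y : Fin m → ℤ) :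
    y ⬝ᵥ B.mulVec x = x ⬝ᵥ B.mulVec y := by
  rw [dotProduct_comm, ← hB, mulVec_transpose, ← dotProduct_mulVec, hB]

lemma kani_expand (B : Matrix (Fin m) (Fin m) ℤ) (hB : Bᵀ = B) (x y : Fin m → ℤ) :
    (x + y) ⬝ᵥ B.mulVec (x + y)
      = x ⬝ᵥ B.mulVec x + y ⬝ᵥ B.mulVec y + 2 * (x ⬝ᵥ B.mulVec y) := by
  rw [mulVec_add, dotProduct_add, add_dotProduct, add_dotProduct, kani_sym B hB x y]
  ring

lemma kani_cast (B : Matrix (Fin m) (Fin m) ℤ) (x y : Fin m → ℤ) :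
    (fun i => (x i : ℚ)) ⬝ᵥ (B.map (Int.cast : ℤ → ℚ)).mulVec (fun i => (y i : ℚ))
      = ((x ⬝ᵥ B.mulVec y : ℤ) : ℚ) := by
  simp only [dotProduct, mulVec, Matrix.map_apply]
  push_cast
  rfl

lemma kani_dot (B : Matrix (Fin m) (Fin m) ℤ) (x y : Fin m → ℤ) :
    (fun i => (x i : ℚ)/2) ⬝ᵥ (B.map (Int.cast : ℤ → ℚ)).mulVec (fun i => (y i : ℚ)/2)
      = ((x ⬝ᵥ B.mulVec y : ℤ) : ℚ)/4 := by
  have e1 : (fun i => (x i : ℚ)/2) = (2⁻¹ : ℚ) • (fun i => (x i : ℚ)) := by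
    funext i; simp [Pi.smul_apply]; ring
  have e2 : (fun i => (y i : ℚ)/2) = (2⁻¹ : ℚ) • (fun i => (y i : ℚ)) := by
    funext i; simp [Pi.smul_apply]; ring
  rw [e1, e2, smul_dotProduct, mulVec_smul, dotProduct_smul, kani_cast B x y]
  simp [smul_eq_mul]; ring

lemma kani_sq_parity (c a : ℤ) (h : (c^2 - a) % 4 = 0) : c % 2 = a % 2 := by
  rcases Int.even_or_odd c with ⟨k, hk⟩ | ⟨k, hk⟩
  · obtain ⟨t, ht⟩ : ∃ t, c^2 = 4*t := ⟨k*k, by rw [hk]; ring⟩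
    rw [ht] at h; omega
  · obtain ⟨t, ht⟩ : ∃ t, c^2 = 4*t + 1 := ⟨k*k + k, by rw [hk]; ring⟩
    rw [ht] at h; omega

lemma kani_key (B : Matrix (Fin m) (Fin m) ℤ) (hB : Bᵀ = B)
    (hmod4 : ∀ x : Fin m → ℤ, (x ⬝ᵥ B.mulVec x) % 4 = 0 ∨ (x ⬝ᵥ B.mulVec x) % 4 = 1)
    (x y : Fin m → ℤ) (c d : ℤ)
    (hc : (c^2 - x ⬝ᵥ B.mulVec x) % 4 = 0) (hd : (d^2 - y ⬝ᵥ B.mulVec y) % 4 = 0) :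
    (2 : ℤ) ∣ (c * d - x ⬝ᵥ B.mulVec y) := by
  have hc2 : c % 2 = (x ⬝ᵥ B.mulVec x) % 2 := kani_sq_parity _ _ hc
  have hd2 : d % 2 = (y ⬝ᵥ B.mulVec y) % 2 := kani_sq_parity _ _ hd
  have ha := hmod4 x; have hb := hmod4 y; have hs := hmod4 (x + y)
  rw [kani_expand B hB x y] at hs
  have hm : (c * d) % 2 = ((c % 2) * (d % 2)) % 2 := Int.mul_emod c d 2
  rcases ha with h1 | h1 <;> rcases hb with h2 | h2
  · rw [show c % 2 = 0 by omega, show d % 2 = 0 by omega] at hm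
    norm_num at hm; omega
  · rw [show c % 2 = 0 by omega, show d % 2 = 1 by omega] at hm
    norm_num at hm; omega
  · rw [show c % 2 = 1 by omega, show d % 2 = 0 by omega] at hm
    norm_num at hm; omega
  · rw [show c % 2 = 1 by omega, show d % 2 = 1 by omega] at hm
    norm_num at hm; omega


/-- Let `N = ℤ^m` be a lattice with symmetric Gram matrix `B` whose quadratic
form only represents integers `≡ 0` or `1 (mod 4)`. Inside `(N(-2) ⊕ ℤζ) ⊗ ℚ`, where `ζ`
has norm `2`, is orthogonal to `N`, and `N(-2)` carries the form scaled by `-2`, let `M_N`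
be the `ℤ`-span of `N ⊕ ℤζ` together with all elements `½(x + (x,x)ζ)` for `x ∈ N`. Then
the induced bilinear form on `M_N` is integral and even, and `ζ ∈ M_N` with `(ζ,ζ) = 2`. -/
theorem kani_lattice_even {m : ℕ} (B : Matrix (Fin m) (Fin m) ℤ) (hB : Bᵀ = B)
    (hmod4 : ∀ x : Fin m → ℤ, (x ⬝ᵥ B.mulVec x) % 4 = 0 ∨ (x ⬝ᵥ B.mulVec x) % 4 = 1) :
    let F : ((Fin m → ℚ) × ℚ) → ((Fin m → ℚ) × ℚ) → ℚ := fun u v =>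
      -2 * (u.1 ⬝ᵥ (B.map (Int.cast : ℤ → ℚ)).mulVec v.1) + 2 * u.2 * v.2
    let ζ : (Fin m → ℚ) × ℚ := (0, 1)
    let M : Submodule ℤ ((Fin m → ℚ) × ℚ) := Submodule.span ℤ
      ({v | ∃ x : Fin m → ℤ, v = (fun i => (x i : ℚ), 0)} ∪ {ζ} ∪
       {v | ∃ x : Fin m → ℤ,
          v = (fun i => (x i : ℚ) / 2, ((x ⬝ᵥ B.mulVec x : ℤ) : ℚ) / 2)})
    ζ ∈ M ∧ F ζ ζ = 2 ∧
      (∀ u ∈ M, ∀ v ∈ M, ∃ k : ℤ, F u v = k) ∧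
      (∀ u ∈ M, ∃ k : ℤ, F u u = 2 * k) := by
  intro F ζ M
  have hF : ∀ u v : (Fin m → ℚ) × ℚ,
      F u v = -2 * (u.1 ⬝ᵥ (B.map (Int.cast : ℤ → ℚ)).mulVec v.1) + 2 * u.2 * v.2 :=
    fun _ _ => rfl
  have hζ : ζ = ((0 : Fin m → ℚ), (1 : ℚ)) := rfl
  have inv : ∀ u, u ∈ M → ∃ (x : Fin m → ℤ) (c : ℤ),
      u = (fun i => (x i : ℚ)/2, (c : ℚ)/2) ∧ (c^2 - x ⬝ᵥ B.mulVec x) % 4 = 0 := by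
    intro u hu
    have hu' : u ∈ Submodule.span ℤ
        ({v | ∃ x : Fin m → ℤ, v = (fun i => (x i : ℚ), 0)} ∪ {ζ} ∪
         {v : (Fin m → ℚ) × ℚ | ∃ x : Fin m → ℤ,
            v = (fun i => (x i : ℚ) / 2, ((x ⬝ᵥ B.mulVec x : ℤ) : ℚ) / 2)}) := hu
    clear hu
    induction hu' using Submodule.span_induction with
    | mem v hv =>
      rcases hv with (⟨x, rfl⟩ | rfl) | ⟨x, rfl⟩
      · refine ⟨(2:ℤ) • x, 0, ?_, ?_⟩
        · rw [Prod.ext_iff]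
          constructor
          · funext i; push_cast [Pi.smul_apply, smul_eq_mul]; ring
          · norm_num
        · have hsm : ((2:ℤ) • x) ⬝ᵥ B.mulVec ((2:ℤ) • x)
              = 4 * (x ⬝ᵥ B.mulVec x) := by
            rw [smul_dotProduct, mulVec_smul, dotProduct_smul, smul_eq_mul, smul_eq_mul]
            ring
          rw [hsm]; omega
      · refine ⟨0, 2, ?_, ?_⟩
        · rw [hζ, Prod.ext_iff]
          constructor
          · funext i; simp
          · norm_num
        · rw [zero_dotProduct]; decide
      · refine ⟨x, x ⬝ᵥ B.mulVec x, rfl, ?_⟩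
        rcases hmod4 x with h | h
        · obtain ⟨t, ht⟩ : ∃ t, x ⬝ᵥ B.mulVec x = 4*t := ⟨x ⬝ᵥ B.mulVec x / 4, by omega⟩
          obtain ⟨T, hT⟩ : ∃ T, (x ⬝ᵥ B.mulVec x)^2 - x ⬝ᵥ B.mulVec x = 4*T :=
            ⟨4*t*t - t, by rw [ht]; ring⟩
          omega
        · obtain ⟨t, ht⟩ : ∃ t, x ⬝ᵥ B.mulVec x = 4*t + 1 := ⟨x ⬝ᵥ B.mulVec x / 4, by omega⟩
          obtain ⟨T, hT⟩ : ∃ T, (x ⬝ᵥ B.mulVec x)^2 - x ⬝ᵥ B.mulVec x = 4*T :=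
            ⟨4*t*t + t, by rw [ht]; ring⟩
          omega
    | zero =>
      refine ⟨0, 0, ?_, ?_⟩
      · rw [Prod.ext_iff]
        constructor
        · funext i; simp
        · norm_num
      · rw [zero_dotProduct]; decide
    | add u v hu hv ihu ihv =>
      obtain ⟨x, c, rfl, hc⟩ := ihu
      obtain ⟨y, d, rfl, hd⟩ := ihv
      refine ⟨x + y, c + d, ?_, ?_⟩
      · rw [Prod.mk_add_mk, Prod.ext_iff]
        constructor
        · funext i; simp [Pi.add_apply]; ring
        · push_cast; ring
      · obtain ⟨T1, hT1⟩ := Int.dvd_of_emod_eq_zero hc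
        obtain ⟨T2, hT2⟩ := Int.dvd_of_emod_eq_zero hd
        obtain ⟨T3, hT3⟩ := kani_key B hB hmod4 x y c d hc hd
        have e : (c + d)^2 - (x + y) ⬝ᵥ B.mulVec (x + y) = 4*(T1 + T2 + T3) := by
          rw [kani_expand B hB x y]
          linear_combination hT1 + hT2 + 2*hT3
        rw [e]; omega
    | smul a u hu ihu =>
      obtain ⟨x, c, rfl, hc⟩ := ihu
      refine ⟨a • x, a * c, ?_, ?_⟩
      · rw [Prod.smul_mk, Prod.ext_iff]
        constructor
        · funext i; simp [Pi.smul_apply, zsmul_eq_mul]; ring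
        · simp [zsmul_eq_mul]; ring
      · have hsm : (a • x) ⬝ᵥ B.mulVec (a • x) = a * (a * (x ⬝ᵥ B.mulVec x)) := by
          rw [smul_dotProduct, mulVec_smul, dotProduct_smul, smul_eq_mul, smul_eq_mul]
        obtain ⟨T, hT⟩ := Int.dvd_of_emod_eq_zero hc
        have e : (a * c)^2 - (a • x) ⬝ᵥ B.mulVec (a • x) = 4*(a*a*T) := by
          rw [hsm]; linear_combination (a*a) * hT
        rw [e]; omega
  refine ⟨Submodule.subset_span (Or.inl (Or.inr rfl)), ?_, ?_, ?_⟩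
  · rw [hF, hζ]
    simp
  · intro u hu v hv
    obtain ⟨x, c, hueq, hc⟩ := inv u hu
    obtain ⟨y, d, hveq, hd⟩ := inv v hv
    obtain ⟨k, hk⟩ := kani_key B hB hmod4 x y c d hc hd
    refine ⟨k, ?_⟩
    rw [hueq, hveq, hF]
    dsimp only
    rw [kani_dot]
    have hkq : ((c : ℚ)) * d - ((x ⬝ᵥ B.mulVec y : ℤ) : ℚ) = 2 * k := by
      exact_mod_cast congrArg (Int.cast : ℤ → ℚ) hk
    linear_combination hkq / 2
  · intro u hu
    obtain ⟨x, c, hueq, hc⟩ := inv u hu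
    obtain ⟨T, hT⟩ := Int.dvd_of_emod_eq_zero hc
    refine ⟨T, ?_⟩
    rw [hueq, hF]
    dsimp only
    rw [kani_dot]
    have hTq : ((c : ℚ))^2 - ((x ⬝ᵥ B.mulVec x : ℤ) : ℚ) = 4 * T := by
      exact_mod_cast congrArg (Int.cast : ℤ → ℚ) hT
    linear_combination hTq / 2
end
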